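/- With Φ, Ψ and ext as defined: if σ and σ' are assignments satisfying Φ that are connected in G(Φ), then ext(σ) and ext(σ') satisfy Ψ and are connected in G(Ψ). (Introducing auxiliary variables for a clause preserves reconfiguration: if x changes to false we change the auxiliary variable a to false immediately before, and if x changes to true we change a to true immediately after.) -/

import Mathlib

/-- Two satisfying assignments of `Φ` are connected in `G(Φ)`: there is a finite
sequence of assignments satisfying `Φ` from the first to the second in which
consecutive assignments differ in the value of exactly one variable. -/
def ConnectedIn {X : Type*} (Φ : (X → Bool) → Prop) (a b : X → Bool) : Prop :=
  ∃ (n : ℕ) (f : ℕ → X → Bool), f 0 = a ∧ f n = b ∧ (∀ i ≤ n, Φ (f i)) ∧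
    ∀ i < n, ∃! x : X, f i x ≠ f (i + 1) x

variable {V : Type*}

/-- The formula `Φ`: `Φ₀` together with the clause `x ∨ y ∨ z`. -/
def PhiCl (Φ₀ : (V → Bool) → Prop) (x y z : V) (σ : V → Bool) : Prop :=
  Φ₀ σ ∧ (σ x = true ∨ σ y = true ∨ σ z = true)

/-- The formula `Ψ` on the extended variable set `V ⊕ Fin 3` (the fresh variables
`a`, `b`, `c` are `Sum.inr 0`, `Sum.inr 1`, `Sum.inr 2`): `Φ₀` on the restriction,
the implications `a → x`, `b → y`, `c → z`, and the clause `a ∨ b ∨ c`. -/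
def PsiCl (Φ₀ : (V → Bool) → Prop) (x y z : V) (τ : V ⊕ Fin 3 → Bool) : Prop :=
  Φ₀ (τ ∘ Sum.inl) ∧
    (τ (Sum.inr 0) = true → τ (Sum.inl x) = true) ∧
    (τ (Sum.inr 1) = true → τ (Sum.inl y) = true) ∧
    (τ (Sum.inr 2) = true → τ (Sum.inl z) = true) ∧
    (τ (Sum.inr 0) = true ∨ τ (Sum.inr 1) = true ∨ τ (Sum.inr 2) = true)

/-- The canonical extension of `σ : V → Bool` to `V ⊕ Fin 3`, assigning to the fresh
variables `a`, `b`, `c` the values `σ x`, `σ y`, `σ z` respectively. -/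
def extAssign (x y z : V) (σ : V → Bool) : V ⊕ Fin 3 → Bool :=
  Sum.elim σ ![σ x, σ y, σ z]

lemma connected_refl' {X : Type*} (Φ : (X → Bool) → Prop) (a : X → Bool) (ha : Φ a) :
    ConnectedIn Φ a a :=
  ⟨0, fun _ => a, rfl, rfl, fun _ _ => ha, fun i hi => by omega⟩

lemma connected_single {X : Type*} (Φ : (X → Bool) → Prop) (a b : X → Bool)
    (ha : Φ a) (hb : Φ b) (h : ∃! w, a w ≠ b w) : ConnectedIn Φ a b := by
  refine ⟨1, fun i => if i = 0 then a else b, by simp, by simp, ?_, ?_⟩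
  · intro i hi; interval_cases i <;> simpa
  · intro i hi; interval_cases i; simpa using h

lemma connected_trans {X : Type*} (Φ : (X → Bool) → Prop) (a b c : X → Bool)
    (h1 : ConnectedIn Φ a b) (h2 : ConnectedIn Φ b c) : ConnectedIn Φ a c := by
  obtain ⟨n1, f1, hf10, hf1n, hf1Φ, hf1s⟩ := h1
  obtain ⟨n2, f2, hf20, hf2n, hf2Φ, hf2s⟩ := h2
  refine ⟨n1 + n2, fun i => if i < n1 then f1 i else f2 (i - n1), ?_, ?_, ?_, ?_⟩
  · by_cases h : 0 < n1
    · simpa [h] using hf10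
    · have : n1 = 0 := by omega
      simp [this, hf20, ← hf1n, this, hf10]
  · have : ¬ (n1 + n2 < n1) := by omega
    simpa [this] using hf2n
  · intro i hi
    by_cases h : i < n1
    · simpa [h] using hf1Φ i (le_of_lt h)
    · simp only [h, if_false]
      exact hf2Φ (i - n1) (by omega)
  · intro i hi
    by_cases h : i + 1 < n1
    · have h' : i < n1 := by omega
      simpa [h, h'] using hf1s i h'
    · by_cases h' : i < n1
      · have he : i + 1 = n1 := by omega
        have : f2 (i + 1 - n1) = f1 (i + 1) := by
          rw [he]; simp [hf20, ← hf1n]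
        simp only [h, h', if_true, if_false, this]
        exact hf1s i h'
      · have : i + 1 - n1 = (i - n1) + 1 := by omega
        simp only [h, h', if_false, this]
        exact hf2s (i - n1) (by omega)

lemma uniq_of_update {X : Type*} [DecidableEq X] (f : X → Bool) (w : X) (b : Bool)
    (h : f w ≠ b) : ∃! u, f u ≠ Function.update f w b u := by
  refine ⟨w, by simpa using h, fun u hu => ?_⟩
  by_contra hne
  have hu' : f u ≠ Function.update f w b u := hu
  rw [Function.update_of_ne hne] at hu'
  exact hu' rfl

lemma connected_update {X : Type*} [DecidableEq X] (Φ : (X → Bool) → Prop)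
    (f : X → Bool) (w : X) (b : Bool) (hf : Φ f) (hg : Φ (Function.update f w b))
    (h : f w ≠ b) : ConnectedIn Φ f (Function.update f w b) :=
  connected_single Φ _ _ hf hg (uniq_of_update f w b h)

lemma ext_sat (Φ₀ : (V → Bool) → Prop) (x y z : V) (σ : V → Bool)
    (h : PhiCl Φ₀ x y z σ) : PsiCl Φ₀ x y z (extAssign x y z σ) := by
  obtain ⟨h0, hcl⟩ := h
  exact ⟨h0, by simp [extAssign], by simp [extAssign], by simp [extAssign],
    by simpa [extAssign] using hcl⟩

lemma step_at_x (Φ₀ : (V → Bool) → Prop) (x y z : V)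
    (hxy : x ≠ y) (hxz : x ≠ z)
    (σ τ : V → Bool) (hσ : PhiCl Φ₀ x y z σ) (hτ : PhiCl Φ₀ x y z τ)
    (hv : σ x ≠ τ x) (hagree : ∀ w, w ≠ x → σ w = τ w) :
    ConnectedIn (PsiCl Φ₀ x y z) (extAssign x y z σ) (extAssign x y z τ) := by
  classical
  have hΨσ := ext_sat Φ₀ x y z σ hσ
  have hΨτ := ext_sat Φ₀ x y z τ hτ
  have hyv : σ y = τ y := hagree y (Ne.symm hxy)
  have hzv : σ z = τ z := hagree z (Ne.symm hxz)
  obtain ⟨hσ0, hσcl⟩ := hσ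
  obtain ⟨hτ0, hτcl⟩ := hτ
  cases hb : σ x with
  | true =>
    have hτx : τ x = false := by
      cases h' : τ x with
      | true => exact absurd (hb.trans h'.symm) hv
      | false => rfl
    have hcl' : σ y = true ∨ σ z = true := by
      rcases hτcl with h | h | h
      · rw [hτx] at h; exact absurd h (by simp)
      · exact Or.inl (hyv.trans h)
      · exact Or.inr (hzv.trans h)
    set M : V ⊕ Fin 3 → Bool := Function.update (extAssign x y z σ) (Sum.inr 0) false with hM
    have hMl : ∀ w, M (Sum.inl w) = σ w := by
      intro w; rw [hM]; simp [Function.update, extAssign]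
    have hM0 : M (Sum.inr 0) = false := by simp [hM]
    have hM1 : M (Sum.inr 1) = σ y := by
      rw [hM]; simp [Function.update, extAssign, Fin.ext_iff]
    have hM2 : M (Sum.inr 2) = σ z := by
      rw [hM]; simp [Function.update, extAssign, Fin.ext_iff]
    have hMcomp : M ∘ Sum.inl = σ := funext hMl
    have hMψ : PsiCl Φ₀ x y z M := by
      refine ⟨hMcomp ▸ hσ0, ?_, ?_, ?_, ?_⟩
      · rw [hM0]; simp
      · rw [hM1, hMl]; exact id
      · rw [hM2, hMl]; exact id
      · rw [hM0, hM1, hM2]; tauto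
    have hext : extAssign x y z τ = Function.update M (Sum.inl x) false := by
      funext w
      rcases w with w | i
      · by_cases hw : w = x
        · subst hw; simp [extAssign, Function.update, hτx]
        · simp only [extAssign, Sum.elim_inl]
          rw [Function.update_of_ne (by simpa using hw), hMl, hagree w hw]
      · fin_cases i <;>
        · rw [Function.update_of_ne (by simp)]
          rw [hM]; simp [extAssign, Function.update, Fin.ext_iff, hτx, ← hyv, ← hzv]
    rw [hext]
    refine connected_trans _ _ M _ ?_ ?_
    · exact connected_update _ _ _ _ hΨσ hMψ (by simp [extAssign, hb])
    · exact connected_update _ _ _ _ hMψ (hext ▸ hΨτ) (by rw [hMl, hb]; simp)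
  | false =>
    have hτx : τ x = true := by
      cases h' : τ x with
      | false => exact absurd (hb.trans h'.symm) hv
      | true => rfl
    have hcl' : σ y = true ∨ σ z = true := by
      rcases hσcl with h | h | h
      · rw [hb] at h; exact absurd h (by simp)
      · exact Or.inl h
      · exact Or.inr h
    set M : V ⊕ Fin 3 → Bool := Function.update (extAssign x y z σ) (Sum.inl x) true with hM
    have hMl : ∀ w, M (Sum.inl w) = τ w := by
      intro w
      by_cases hw : w = x
      · subst hw; simp [hM, hτx]
      · rw [hM, Function.update_of_ne (by simpa using hw)]
        simp [extAssign, hagree w hw]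
    have hM0 : M (Sum.inr 0) = false := by
      rw [hM, Function.update_of_ne (by simp)]; simp [extAssign, hb]
    have hM1 : M (Sum.inr 1) = σ y := by
      rw [hM, Function.update_of_ne (by simp)]; simp [extAssign]
    have hM2 : M (Sum.inr 2) = σ z := by
      rw [hM, Function.update_of_ne (by simp)]; simp [extAssign]
    have hMcomp : M ∘ Sum.inl = τ := funext hMl
    have hMψ : PsiCl Φ₀ x y z M := by
      refine ⟨hMcomp ▸ hτ0, ?_, ?_, ?_, ?_⟩
      · rw [hM0]; simp
      · rw [hM1, hMl, ← hyv]; exact id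
      · rw [hM2, hMl, ← hzv]; exact id
      · rw [hM0, hM1, hM2]; tauto
    have hext : extAssign x y z τ = Function.update M (Sum.inr 0) true := by
      funext w
      rcases w with w | i
      · rw [Function.update_of_ne (by simp)]
        simp [extAssign, hMl w]
      · fin_cases i
        · simp [extAssign, hτx]
        · rw [hM]; simp [Function.update, extAssign, Fin.ext_iff, hyv, hzv]
        · rw [hM]; simp [Function.update, extAssign, Fin.ext_iff, hyv, hzv]
    rw [hext]
    refine connected_trans _ _ M _ ?_ ?_
    · exact connected_update _ _ _ _ hΨσ hMψ (by simp [extAssign, hb])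
    · exact connected_update _ _ _ _ hMψ (hext ▸ hΨτ) (by rw [hM0]; simp)

lemma step_at_y (Φ₀ : (V → Bool) → Prop) (x y z : V)
    (hxy : x ≠ y) (hyz : y ≠ z)
    (σ τ : V → Bool) (hσ : PhiCl Φ₀ x y z σ) (hτ : PhiCl Φ₀ x y z τ)
    (hv : σ y ≠ τ y) (hagree : ∀ w, w ≠ y → σ w = τ w) :
    ConnectedIn (PsiCl Φ₀ x y z) (extAssign x y z σ) (extAssign x y z τ) := by
  classical
  have hΨσ := ext_sat Φ₀ x y z σ hσ
  have hΨτ := ext_sat Φ₀ x y z τ hτ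
  have hxv : σ x = τ x := hagree x hxy
  have hzv : σ z = τ z := hagree z (Ne.symm hyz)
  obtain ⟨hσ0, hσcl⟩ := hσ
  obtain ⟨hτ0, hτcl⟩ := hτ
  cases hb : σ y with
  | true =>
    have hτx : τ y = false := by
      cases h' : τ y with
      | true => exact absurd (hb.trans h'.symm) hv
      | false => rfl
    have hcl' : σ x = true ∨ σ z = true := by
      rcases hτcl with h | h | h
      · exact Or.inl (hxv.trans h)
      · rw [hτx] at h; exact absurd h (by simp)
      · exact Or.inr (hzv.trans h)
    set M : V ⊕ Fin 3 → Bool := Function.update (extAssign x y z σ) (Sum.inr 1) false with hM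
    have hMl : ∀ w, M (Sum.inl w) = σ w := by
      intro w; rw [hM]; simp [Function.update, extAssign]
    have hM1 : M (Sum.inr 1) = false := by simp [hM]
    have hM0 : M (Sum.inr 0) = σ x := by
      rw [hM]; simp [Function.update, extAssign, Fin.ext_iff]
    have hM2 : M (Sum.inr 2) = σ z := by
      rw [hM]; simp [Function.update, extAssign, Fin.ext_iff]
    have hMcomp : M ∘ Sum.inl = σ := funext hMl
    have hMψ : PsiCl Φ₀ x y z M := by
      refine ⟨hMcomp ▸ hσ0, ?_, ?_, ?_, ?_⟩
      · rw [hM0, hMl]; exact id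
      · rw [hM1]; simp
      · rw [hM2, hMl]; exact id
      · rw [hM0, hM1, hM2]; tauto
    have hext : extAssign x y z τ = Function.update M (Sum.inl y) false := by
      funext w
      rcases w with w | i
      · by_cases hw : w = y
        · subst hw; simp [extAssign, Function.update, hτx]
        · simp only [extAssign, Sum.elim_inl]
          rw [Function.update_of_ne (by simpa using hw), hMl, hagree w hw]
      · fin_cases i <;>
        · rw [Function.update_of_ne (by simp)]
          rw [hM]; simp [extAssign, Function.update, Fin.ext_iff, hτx, ← hxv, ← hzv]
    rw [hext]
    refine connected_trans _ _ M _ ?_ ?_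
    · exact connected_update _ _ _ _ hΨσ hMψ (by simp [extAssign, hb])
    · exact connected_update _ _ _ _ hMψ (hext ▸ hΨτ) (by rw [hMl, hb]; simp)
  | false =>
    have hτx : τ y = true := by
      cases h' : τ y with
      | false => exact absurd (hb.trans h'.symm) hv
      | true => rfl
    have hcl' : σ x = true ∨ σ z = true := by
      rcases hσcl with h | h | h
      · exact Or.inl h
      · rw [hb] at h; exact absurd h (by simp)
      · exact Or.inr h
    set M : V ⊕ Fin 3 → Bool := Function.update (extAssign x y z σ) (Sum.inl y) true with hM
    have hMl : ∀ w, M (Sum.inl w) = τ w := by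
      intro w
      by_cases hw : w = y
      · subst hw; simp [hM, hτx]
      · rw [hM, Function.update_of_ne (by simpa using hw)]
        simp [extAssign, hagree w hw]
    have hM1 : M (Sum.inr 1) = false := by
      rw [hM, Function.update_of_ne (by simp)]; simp [extAssign, hb]
    have hM0 : M (Sum.inr 0) = σ x := by
      rw [hM, Function.update_of_ne (by simp)]; simp [extAssign]
    have hM2 : M (Sum.inr 2) = σ z := by
      rw [hM, Function.update_of_ne (by simp)]; simp [extAssign]
    have hMcomp : M ∘ Sum.inl = τ := funext hMl
    have hMψ : PsiCl Φ₀ x y z M := by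
      refine ⟨hMcomp ▸ hτ0, ?_, ?_, ?_, ?_⟩
      · rw [hM0, hMl, ← hxv]; exact id
      · rw [hM1]; simp
      · rw [hM2, hMl, ← hzv]; exact id
      · rw [hM0, hM1, hM2]; tauto
    have hext : extAssign x y z τ = Function.update M (Sum.inr 1) true := by
      funext w
      rcases w with w | i
      · rw [Function.update_of_ne (by simp)]
        simp [extAssign, hMl w]
      · fin_cases i
        · rw [hM]; simp [Function.update, extAssign, Fin.ext_iff, hxv, hzv]
        · simp [extAssign, hτx]
        · rw [hM]; simp [Function.update, extAssign, Fin.ext_iff, hxv, hzv]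
    rw [hext]
    refine connected_trans _ _ M _ ?_ ?_
    · exact connected_update _ _ _ _ hΨσ hMψ (by simp [extAssign, hb])
    · exact connected_update _ _ _ _ hMψ (hext ▸ hΨτ) (by rw [hM1]; simp)

lemma step_at_z (Φ₀ : (V → Bool) → Prop) (x y z : V)
    (hxz : x ≠ z) (hyz : y ≠ z)
    (σ τ : V → Bool) (hσ : PhiCl Φ₀ x y z σ) (hτ : PhiCl Φ₀ x y z τ)
    (hv : σ z ≠ τ z) (hagree : ∀ w, w ≠ z → σ w = τ w) :
    ConnectedIn (PsiCl Φ₀ x y z) (extAssign x y z σ) (extAssign x y z τ) := by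
  classical
  have hΨσ := ext_sat Φ₀ x y z σ hσ
  have hΨτ := ext_sat Φ₀ x y z τ hτ
  have hxv : σ x = τ x := hagree x hxz
  have hyv : σ y = τ y := hagree y hyz
  obtain ⟨hσ0, hσcl⟩ := hσ
  obtain ⟨hτ0, hτcl⟩ := hτ
  cases hb : σ z with
  | true =>
    have hτx : τ z = false := by
      cases h' : τ z with
      | true => exact absurd (hb.trans h'.symm) hv
      | false => rfl
    have hcl' : σ x = true ∨ σ y = true := by
      rcases hτcl with h | h | h
      · exact Or.inl (hxv.trans h)
      · exact Or.inr (hyv.trans h)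
      · rw [hτx] at h; exact absurd h (by simp)
    set M : V ⊕ Fin 3 → Bool := Function.update (extAssign x y z σ) (Sum.inr 2) false with hM
    have hMl : ∀ w, M (Sum.inl w) = σ w := by
      intro w; rw [hM]; simp [Function.update, extAssign]
    have hM2 : M (Sum.inr 2) = false := by simp [hM]
    have hM0 : M (Sum.inr 0) = σ x := by
      rw [hM]; simp [Function.update, extAssign, Fin.ext_iff]
    have hM1 : M (Sum.inr 1) = σ y := by
      rw [hM]; simp [Function.update, extAssign, Fin.ext_iff]
    have hMcomp : M ∘ Sum.inl = σ := funext hMl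
    have hMψ : PsiCl Φ₀ x y z M := by
      refine ⟨hMcomp ▸ hσ0, ?_, ?_, ?_, ?_⟩
      · rw [hM0, hMl]; exact id
      · rw [hM1, hMl]; exact id
      · rw [hM2]; simp
      · rw [hM0, hM1, hM2]; tauto
    have hext : extAssign x y z τ = Function.update M (Sum.inl z) false := by
      funext w
      rcases w with w | i
      · by_cases hw : w = z
        · subst hw; simp [extAssign, Function.update, hτx]
        · simp only [extAssign, Sum.elim_inl]
          rw [Function.update_of_ne (by simpa using hw), hMl, hagree w hw]
      · fin_cases i <;>
        · rw [Function.update_of_ne (by simp)]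
          rw [hM]; simp [extAssign, Function.update, Fin.ext_iff, hτx, ← hxv, ← hyv]
    rw [hext]
    refine connected_trans _ _ M _ ?_ ?_
    · exact connected_update _ _ _ _ hΨσ hMψ (by simp [extAssign, hb])
    · exact connected_update _ _ _ _ hMψ (hext ▸ hΨτ) (by rw [hMl, hb]; simp)
  | false =>
    have hτx : τ z = true := by
      cases h' : τ z with
      | false => exact absurd (hb.trans h'.symm) hv
      | true => rfl
    have hcl' : σ x = true ∨ σ y = true := by
      rcases hσcl with h | h | h
      · exact Or.inl h
      · exact Or.inr h
      · rw [hb] at h; exact absurd h (by simp)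
    set M : V ⊕ Fin 3 → Bool := Function.update (extAssign x y z σ) (Sum.inl z) true with hM
    have hMl : ∀ w, M (Sum.inl w) = τ w := by
      intro w
      by_cases hw : w = z
      · subst hw; simp [hM, hτx]
      · rw [hM, Function.update_of_ne (by simpa using hw)]
        simp [extAssign, hagree w hw]
    have hM2 : M (Sum.inr 2) = false := by
      rw [hM, Function.update_of_ne (by simp)]; simp [extAssign, hb]
    have hM0 : M (Sum.inr 0) = σ x := by
      rw [hM, Function.update_of_ne (by simp)]; simp [extAssign]
    have hM1 : M (Sum.inr 1) = σ y := by
      rw [hM, Function.update_of_ne (by simp)]; simp [extAssign]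
    have hMcomp : M ∘ Sum.inl = τ := funext hMl
    have hMψ : PsiCl Φ₀ x y z M := by
      refine ⟨hMcomp ▸ hτ0, ?_, ?_, ?_, ?_⟩
      · rw [hM0, hMl, ← hxv]; exact id
      · rw [hM1, hMl, ← hyv]; exact id
      · rw [hM2]; simp
      · rw [hM0, hM1, hM2]; tauto
    have hext : extAssign x y z τ = Function.update M (Sum.inr 2) true := by
      funext w
      rcases w with w | i
      · rw [Function.update_of_ne (by simp)]
        simp [extAssign, hMl w]
      · fin_cases i
        · rw [hM]; simp [Function.update, extAssign, Fin.ext_iff, hxv, hyv]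
        · rw [hM]; simp [Function.update, extAssign, Fin.ext_iff, hxv, hyv]
        · simp [extAssign, hτx]
    rw [hext]
    refine connected_trans _ _ M _ ?_ ?_
    · exact connected_update _ _ _ _ hΨσ hMψ (by simp [extAssign, hb])
    · exact connected_update _ _ _ _ hMψ (hext ▸ hΨτ) (by rw [hM2]; simp)

lemma step_conn (Φ₀ : (V → Bool) → Prop) (x y z : V)
    (hxy : x ≠ y) (hxz : x ≠ z) (hyz : y ≠ z)
    (σ τ : V → Bool) (hσ : PhiCl Φ₀ x y z σ) (hτ : PhiCl Φ₀ x y z τ)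
    (hd : ∃! v, σ v ≠ τ v) :
    ConnectedIn (PsiCl Φ₀ x y z) (extAssign x y z σ) (extAssign x y z τ) := by
  classical
  obtain ⟨v, hv, huniq⟩ := hd
  have hagree : ∀ w, w ≠ v → σ w = τ w := by
    intro w hw
    by_contra hne
    exact hw (huniq w hne)
  by_cases hvx : v = x
  · subst hvx
    exact step_at_x Φ₀ v y z hxy hxz σ τ hσ hτ hv hagree
  by_cases hvy : v = y
  · subst hvy
    exact step_at_y Φ₀ x v z hxy hyz σ τ hσ hτ hv hagree
  by_cases hvz : v = z
  · subst hvz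
    exact step_at_z Φ₀ x y v hxz hyz σ τ hσ hτ hv hagree
  · -- flipped variable is outside the clause: a single step
    have hΨσ := ext_sat Φ₀ x y z σ hσ
    have hΨτ := ext_sat Φ₀ x y z τ hτ
    have hext : extAssign x y z τ = Function.update (extAssign x y z σ) (Sum.inl v) (τ v) := by
      funext w
      rcases w with w | i
      · by_cases hw : w = v
        · subst hw; simp [extAssign]
        · rw [Function.update_of_ne (by simpa using hw)]
          simp [extAssign, hagree w hw]
      · rw [Function.update_of_ne (by simp)]
        fin_cases i <;>
          simp [extAssign, hagree x (fun h => hvx h.symm),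
            hagree y (fun h => hvy h.symm), hagree z (fun h => hvz h.symm)]
    rw [hext]
    exact connected_update _ _ _ _ hΨσ (hext ▸ hΨτ) (by simpa [extAssign] using hv)

theorem stmt_17 (Φ₀ : (V → Bool) → Prop) (x y z : V)
    (hxy : x ≠ y) (hxz : x ≠ z) (hyz : y ≠ z)
    (σ σ' : V → Bool) (hσ : PhiCl Φ₀ x y z σ) (hσ' : PhiCl Φ₀ x y z σ')
    (hconn : ConnectedIn (PhiCl Φ₀ x y z) σ σ') :
    PsiCl Φ₀ x y z (extAssign x y z σ) ∧ PsiCl Φ₀ x y z (extAssign x y z σ') ∧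
      ConnectedIn (PsiCl Φ₀ x y z) (extAssign x y z σ) (extAssign x y z σ') := by
  refine ⟨ext_sat Φ₀ x y z σ hσ, ext_sat Φ₀ x y z σ' hσ', ?_⟩
  obtain ⟨n, f, h0, hn, hΦ, hstep⟩ := hconn
  have key : ∀ i ≤ n, ConnectedIn (PsiCl Φ₀ x y z) (extAssign x y z (f 0)) (extAssign x y z (f i)) := by
    intro i
    induction i with
    | zero => exact fun _ => connected_refl' _ _ (ext_sat Φ₀ x y z (f 0) (hΦ 0 (Nat.zero_le _)))
    | succ i ih =>
      intro hi
      refine connected_trans _ _ _ _ (ih (by omega)) ?_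
      exact step_conn Φ₀ x y z hxy hxz hyz (f i) (f (i + 1))
        (hΦ i (by omega)) (hΦ (i + 1) hi) (hstep i (by omega))
  have := key n le_rfl
  rwa [h0, hn] at this
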